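/- Let t be a positive integer and let n ≥ 4t + 4 be an even integer with gcd(n/2, t) = 1. Then there exists a set S ⊆ {1, …, n/2 − 1} such that the circulant graph Circ(n, S) is a nut graph and is 4t-regular. -/

import Mathlib

open Finset Polynomial

/-- The circulant graph `Circ(n, S)` on the vertex set `Fin n` (identified with `ℤ/nℤ`):
distinct vertices `i` and `j` are adjacent iff `i - j ≡ ±s (mod n)` for some `s ∈ S`. -/
def circ (n : ℕ) (S : Finset ℕ) : SimpleGraph (Fin n) where
  Adj i j := i ≠ j ∧ ∃ s ∈ S,
      ((i.val : ZMod n) - (j.val : ZMod n) = (s : ZMod n) ∨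
        (j.val : ZMod n) - (i.val : ZMod n) = (s : ZMod n))
  symm := by
    refine ⟨?_⟩
    rintro i j ⟨hij, s, hs, h⟩
    exact ⟨hij.symm, s, hs, h.symm⟩
  loopless := by
    refine ⟨?_⟩
    rintro i ⟨h, -⟩
    exact h rfl

open Classical in
/-- The adjacency matrix (over `ℚ`) of a graph on `Fin n`. -/
noncomputable def adjMat {n : ℕ} (G : SimpleGraph (Fin n)) :
    Matrix (Fin n) (Fin n) ℚ :=
  Matrix.of fun i j => if G.Adj i j then 1 else 0

/-- A graph on at least two vertices is a nut graph if the kernel of its rational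
adjacency matrix is one-dimensional, spanned by a vector having no zero entries. -/
def IsNutGraph {n : ℕ} (G : SimpleGraph (Fin n)) : Prop :=
  2 ≤ n ∧ ∃ v : Fin n → ℚ, (∀ i, v i ≠ 0) ∧ (adjMat G).mulVec v = 0 ∧
    ∀ w : Fin n → ℚ, (adjMat G).mulVec w = 0 → ∃ c : ℚ, w = c • v

open Classical in
/-- The degree of a vertex of a graph on `Fin n`. -/
noncomputable def degOf {n : ℕ} (G : SimpleGraph (Fin n)) (v : Fin n) : ℕ :=
  (Finset.univ.filter fun w => G.Adj v w).card

/-- A graph is `d`-regular if every vertex has degree `d`. -/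
def IsRegularGraph {n : ℕ} (G : SimpleGraph (Fin n)) (d : ℕ) : Prop :=
  ∀ v, degOf G v = d

/-- The eigenvalue polynomial `P(y) = ∑_{k=1}^{n-1} a_k y^k`, where `a_k = 1` iff
`k ∈ S` or `n - k ∈ S`. -/
noncomputable def Pval (n : ℕ) (S : Finset ℕ) (y : ℂ) : ℂ :=
  ∑ k ∈ Finset.Ico 1 n, (if k ∈ S ∨ n - k ∈ S then (1 : ℂ) else 0) * y ^ k

/-- `ω = e^{2πi/n}`. -/
noncomputable def omegaC (n : ℕ) : ℂ :=
  Complex.exp (2 * (Real.pi : ℂ) * Complex.I / (n : ℂ))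

/-- The generator set `S_t = {1, …, 2t+1} \ {t}`. -/
def St (t : ℕ) : Finset ℕ := (Finset.Icc 1 (2 * t + 1)).erase t

/-- The polynomial `Q_t(y) = y^{4t+3} − y^{3t+2} + y^{3t+1} − y^{2t+2} + y^{2t+1}
− y^{t+2} + y^{t+1} − 1` over `ℤ`. -/
noncomputable def Qt (t : ℕ) : Polynomial ℤ :=
  X ^ (4 * t + 3) - X ^ (3 * t + 2) + X ^ (3 * t + 1) - X ^ (2 * t + 2)
    + X ^ (2 * t + 1) - X ^ (t + 2) + X ^ (t + 1) - 1

/-!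
A circulant graph `circ n S` is diagonalised by the characters `k ↦ y ^ k`, `y ^ n = 1`, with
eigenvalues `∑ s ∈ S, (y ^ s + y ^ (-s))`. For even `n`, if this symbol vanishes at `y = -1` and
nowhere else, the kernel of the adjacency matrix is spanned by `k ↦ (-1) ^ k`, which has no zero
entries, so the graph is a nut graph.

For `n = 2m` take `S = {a + 1, …, a + 2t}`, a `4t`-regular choice. Its symbol `P` satisfies
`y ^ (a + 2t) · P(y) = (y ^ (2a + 2t + 1) + 1)(1 + y + ⋯ + y ^ (2t - 1))`, which vanishes at `-1`.
At another root of unity `y ≠ 1` a zero forces `y ^ (2t) = 1` or `y ^ (2(2a + 2t + 1)) = 1`;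
when `t` and `2a + 2t + 1` are both coprime to `m` either gives `y ^ 2 = 1`, so `y = ±1`. Such an
`a` with `a + 2t + 1 ≤ m` exists as soon as `m ≥ 2t + 2`: make `2a + 2t + 1` equal to `m - 1` or
`m + 2`, according to the parity of `m`.
-/

open Finset

/-- The eigenvalue of the adjacency matrix of `circ n S` on the eigenvector `k ↦ y ^ k`,
for an `n`-th root of unity `y`. -/
def circSymbol {R : Type*} [CommRing R] (n : ℕ) (S : Finset ℕ) (y : R) : R :=
  ∑ s ∈ S, (y ^ s + y ^ (n - s))

/-- Unlike `ZMod.finEquiv`, this is not defined by cases on `n`. -/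
def finEquivZMod (n : ℕ) [NeZero n] : Fin n ≃ ZMod n where
  toFun i := (i : ℕ)
  invFun z := ⟨z.val, z.val_lt⟩
  left_inv i := Fin.ext (ZMod.val_cast_of_lt i.isLt)
  right_inv := ZMod.natCast_zmod_val

@[simp]
lemma natCast_finEquivZMod_symm (n : ℕ) [NeZero n] (z : ZMod n) :
    (((finEquivZMod n).symm z : ℕ) : ZMod n) = z :=
  (finEquivZMod n).apply_symm_apply z

lemma pow_val_natCast {M : Type*} [Monoid M] {n : ℕ} {c : M} (hc : c ^ n = 1) (m : ℕ) :
    c ^ (m : ZMod n).val = c ^ m := by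
  rw [ZMod.val_natCast, ← pow_eq_pow_mod m hc]

lemma adjMat_mulVec_apply {n : ℕ} (G : SimpleGraph (Fin n)) [DecidableRel G.Adj]
    (w : Fin n → ℚ) (k : Fin n) :
    (adjMat G).mulVec w k = ∑ i, if G.Adj k i then w i else 0 := by
  simp only [adjMat, Matrix.mulVec, dotProduct, Matrix.of_apply, ite_mul, one_mul, zero_mul]

lemma natCast_ne_zero_of_lt {n s : ℕ} (h0 : 0 < s) (hs : s < n) : (s : ZMod n) ≠ 0 := by
  rw [Ne, ZMod.natCast_eq_zero_iff]
  exact fun h => absurd (Nat.le_of_dvd h0 h) (by omega)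

section Circulant

variable {n : ℕ} {S : Finset ℕ}

lemma circ_adj_iff (hS : ∀ s ∈ S, 0 < s ∧ 2 * s < n) (k i : Fin n) :
    (circ n S).Adj k i ↔
      ∃ s ∈ S, ((i : ℕ) : ZMod n) = (k : ℕ) + s ∨ ((i : ℕ) : ZMod n) = (k : ℕ) - s := by
  constructor
  · rintro ⟨-, s, hs, h | h⟩
    · exact ⟨s, hs, Or.inr (by linear_combination -h)⟩
    · exact ⟨s, hs, Or.inl (by linear_combination h)⟩
  · rintro ⟨s, hs, h⟩
    have hs0 : (s : ZMod n) ≠ 0 := natCast_ne_zero_of_lt (hS s hs).1 (by grind)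
    refine ⟨?_, s, hs, ?_⟩
    · rintro rfl
      rcases h with h | h
      · exact hs0 (by linear_combination -h)
      · exact hs0 (by linear_combination h)
    · rcases h with h | h
      · exact Or.inr (by linear_combination h)
      · exact Or.inl (by linear_combination -h)

lemma sum_ite_circ_adj [NeZero n] {M : Type*} [AddCommMonoid M]
    (hS : ∀ s ∈ S, 0 < s ∧ 2 * s < n) (g : ZMod n → M) (k : Fin n)
    [DecidablePred ((circ n S).Adj k)] :
    ∑ i, (if (circ n S).Adj k i then g ((i : ℕ) : ZMod n) else 0) =
      ∑ s ∈ S, (g ((k : ℕ) + s) + g ((k : ℕ) - s)) := by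
  classical
  have hcast : ∀ s ∈ S, ∀ s' ∈ S, (s : ZMod n) = s' → s = s' := fun s hs s' hs' h => by
    have := congrArg ZMod.val h
    rwa [ZMod.val_cast_of_lt (by grind), ZMod.val_cast_of_lt (by grind)] at this
  have hdisj : Disjoint (S.image fun s : ℕ => ((k : ℕ) : ZMod n) + s)
      (S.image fun s : ℕ => ((k : ℕ) : ZMod n) - s) := by
    simp only [disjoint_left, mem_image, not_exists, not_and]
    rintro _ ⟨s, hs, rfl⟩ s' hs' h
    refine natCast_ne_zero_of_lt (n := n) (s := s + s') (by grind) (by grind) ?_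
    push_cast
    linear_combination -h
  have hnbhd : univ.filter (fun z => (circ n S).Adj k ((finEquivZMod n).symm z)) =
      S.image (fun s : ℕ => ((k : ℕ) : ZMod n) + s) ∪
        S.image (fun s : ℕ => ((k : ℕ) : ZMod n) - s) := by
    ext z
    simp only [mem_filter, mem_univ, true_and, circ_adj_iff hS, natCast_finEquivZMod_symm,
      mem_union, mem_image, eq_comm (a := z), and_or_left, exists_or]
  rw [← (finEquivZMod n).symm.sum_comp]
  simp only [natCast_finEquivZMod_symm]
  rw [← sum_filter, hnbhd, sum_union hdisj,
    sum_image fun s hs s' hs' h => hcast s hs s' hs' (add_left_cancel h),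
    sum_image fun s hs s' hs' h => hcast s hs s' hs' (sub_right_injective h), sum_add_distrib]

lemma degOf_circ [NeZero n] (hS : ∀ s ∈ S, 0 < s ∧ 2 * s < n) (k : Fin n) :
    degOf (circ n S) k = 2 * #S := by
  classical
  rw [degOf, card_filter, sum_ite_circ_adj hS (fun _ => 1), sum_const, smul_eq_mul, mul_comm]

lemma sum_ite_circ_adj_pow [NeZero n] {R : Type*} [CommRing R]
    (hS : ∀ s ∈ S, 0 < s ∧ 2 * s < n) {c : R} (hc : c ^ n = 1) (k : Fin n)
    [DecidablePred ((circ n S).Adj k)] :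
    ∑ i, (if (circ n S).Adj k i then c ^ (i : ℕ) else 0) = c ^ (k : ℕ) * circSymbol n S c := by
  have hi : ∀ i : Fin n, c ^ (i : ℕ) = c ^ ((i : ℕ) : ZMod n).val := fun i => by
    rw [pow_val_natCast hc]
  simp only [hi, sum_ite_circ_adj hS (fun z => c ^ z.val), circSymbol, mul_sum]
  refine sum_congr rfl fun s hs => ?_
  have hsub : ((k : ℕ) : ZMod n) - s = ((k + (n - s) : ℕ) : ZMod n) := by
    rw [Nat.cast_add, Nat.cast_sub (by grind), ZMod.natCast_self]
    ring
  rw [← Nat.cast_add, hsub]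
  simp only [pow_val_natCast hc, pow_add, mul_add]

lemma sum_mul_pow_mul_circSymbol_eq_zero [NeZero n] {K : Type*} [Field K] [CharZero K]
    (hS : ∀ s ∈ S, 0 < s ∧ 2 * s < n) {w : Fin n → ℚ} (hw : (adjMat (circ n S)).mulVec w = 0)
    {y : K} (hy : y ^ n = 1) :
    (∑ k, (w k : K) * y ^ (k : ℕ)) * circSymbol n S y = 0 := by
  classical
  calc (∑ k, (w k : K) * y ^ (k : ℕ)) * circSymbol n S y
      = ∑ k, (w k : K) * ∑ i, (if (circ n S).Adj k i then y ^ (i : ℕ) else 0) := by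
        simp only [sum_ite_circ_adj_pow hS hy, sum_mul, mul_assoc]
    _ = ∑ i, ((adjMat (circ n S)).mulVec w i : K) * y ^ (i : ℕ) := by
        simp only [adjMat_mulVec_apply, Rat.cast_sum, mul_sum, sum_mul]
        rw [sum_comm]
        refine sum_congr rfl fun i _ => sum_congr rfl fun k _ => ?_
        rw [(circ n S).adj_comm k i]
        split_ifs <;> simp [mul_comm]
    _ = 0 := by simp [hw]

end Circulant

lemma eq_zero_of_forall_sum_mul_pow_eq_zero {K : Type*} [Field K] {n : ℕ} {ω : K}
    (hω : IsPrimitiveRoot ω n) {v : Fin n → K}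
    (hv : ∀ y : K, y ^ n = 1 → ∑ k, v k * y ^ (k : ℕ) = 0) : v = 0 := by
  refine Matrix.eq_zero_of_mulVec_eq_zero (M := Matrix.vandermonde fun j : Fin n => ω ^ (j : ℕ))
    (Matrix.det_vandermonde_ne_zero_iff.mpr fun i j h => Fin.ext (hω.pow_inj i.isLt j.isLt h)) ?_
  funext j
  simpa [Matrix.mulVec, dotProduct, Matrix.vandermonde, mul_comm] using
    hv _ (by rw [← pow_mul, mul_comm, pow_mul, hω.pow_eq_one, one_pow])

theorem isNutGraph_circ {K : Type*} [Field K] [CharZero K] {n : ℕ} {S : Finset ℕ} {ω : K}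
    (hω : IsPrimitiveRoot ω n) (hn : 2 ≤ n) (heven : Even n) (hS : ∀ s ∈ S, 0 < s ∧ 2 * s < n)
    (hneg : circSymbol n S (-1 : ℚ) = 0)
    (hne : ∀ y : K, y ^ n = 1 → y ≠ -1 → circSymbol n S y ≠ 0) :
    IsNutGraph (circ n S) := by
  classical
  have : NeZero n := ⟨by omega⟩
  set alt : Fin n → ℚ := fun k => (-1) ^ (k : ℕ)
  have halt : (adjMat (circ n S)).mulVec alt = 0 := funext fun k => by
    simp [adjMat_mulVec_apply, alt, sum_ite_circ_adj_pow hS heven.neg_one_pow, hneg]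
  refine ⟨hn, alt, fun k => pow_ne_zero _ (by norm_num), halt, fun w hw => ?_⟩
  -- `w - c • alt` is a kernel vector whose Fourier coefficient at `-1` vanishes by the choice of
  -- `c`, and at every other root of unity because the symbol is nonzero there.
  set c := (∑ k, w k * (-1) ^ (k : ℕ)) / n
  set v := w - c • alt
  have hv : (adjMat (circ n S)).mulVec v = 0 := by
    rw [Matrix.mulVec_sub, Matrix.mulVec_smul, hw, halt, smul_zero, sub_zero]
  have hv_neg : ∑ k, v k * (-1) ^ (k : ℕ) = 0 := by
    simp only [v, alt, c, Pi.sub_apply, Pi.smul_apply, smul_eq_mul, sub_mul, sum_sub_distrib,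
      mul_assoc, ← pow_add, ← two_mul, pow_mul, neg_one_sq, one_pow, mul_one, sum_const,
      card_univ, Fintype.card_fin, nsmul_eq_mul]
    rw [mul_div_cancel₀ _ (by exact_mod_cast NeZero.ne n), sub_self]
  have hv0 : (fun k => (v k : K)) = 0 := eq_zero_of_forall_sum_mul_pow_eq_zero hω fun y hy => by
    by_cases hy1 : y = -1
    · subst hy1
      exact_mod_cast congrArg (Rat.cast : ℚ → K) hv_neg
    · exact (mul_eq_zero.mp (sum_mul_pow_mul_circSymbol_eq_zero hS hv hy)).resolve_right
        (hne y hy hy1)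
  exact ⟨c, funext fun k => sub_eq_zero.mp (Rat.cast_eq_zero.mp (congrFun hv0 k) : v k = 0)⟩

lemma circSymbol_Icc_mul_pow {R : Type*} [CommRing R] {n a l : ℕ} (hal : a + l ≤ n) {y : R}
    (hy : y ^ n = 1) :
    circSymbol n (Icc (a + 1) (a + l)) y * y ^ (a + l) =
      (y ^ (2 * a + l + 1) + 1) * ∑ i ∈ range l, y ^ i := by
  have hlen : a + l + 1 - (a + 1) = l := by omega
  have hterm : ∀ i ∈ range l, (y ^ (a + 1 + i) + y ^ (n - (a + 1 + i))) * y ^ (a + l) =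
      y ^ (2 * a + l + 1) * y ^ i + y ^ (l - 1 - i) := fun i hi => by
    have hexp : n - (a + 1 + i) + (a + l) = n + (l - 1 - i) := by grind
    rw [add_mul, ← pow_add y (n - _), hexp, pow_add y n, hy, one_mul]
    ring
  rw [circSymbol, ← Ico_add_one_right_eq_Icc, sum_Ico_eq_sum_range, hlen, sum_mul,
    sum_congr rfl hterm, sum_add_distrib, ← mul_sum, sum_range_reflect (fun i => y ^ i) l]
  ring

lemma circSymbol_Icc_neg_one {R : Type*} [CommRing R] {n a t : ℕ} (hat : a + 2 * t ≤ n)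
    (hn : Even n) : circSymbol n (Icc (a + 1) (a + 2 * t)) (-1 : R) = 0 := by
  have h := circSymbol_Icc_mul_pow hat hn.neg_one_pow (R := R)
  rw [(Odd.neg_one_pow ⟨a + t, by ring⟩ : (-1 : R) ^ (2 * a + 2 * t + 1) = -1), neg_add_cancel,
    zero_mul] at h
  exact ((isUnit_neg_one.pow _).mul_left_eq_zero).mp h

lemma eq_one_or_eq_neg_one_of_pow_two_mul_eq_one {R : Type*} [CommRing R] [NoZeroDivisors R]
    {y : R} {k m : ℕ} (hkm : Nat.Coprime k m) (hk : y ^ (2 * k) = 1) (hm : y ^ (2 * m) = 1) :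
    y = 1 ∨ y = -1 := by
  have h := pow_gcd_eq_one.mpr ⟨hk, hm⟩
  rw [Nat.gcd_mul_left, hkm.gcd_eq_one, mul_one] at h
  exact sq_eq_one_iff.mp h

lemma circSymbol_Icc_ne_zero {K : Type*} [Field K] [CharZero K] {m a t : ℕ} (ht : 0 < t)
    (hat : a + 2 * t ≤ 2 * m) (hcop_t : Nat.Coprime t m)
    (hcop_u : Nat.Coprime (2 * a + 2 * t + 1) m)
    {y : K} (hy : y ^ (2 * m) = 1) (hy1 : y ≠ -1) :
    circSymbol (2 * m) (Icc (a + 1) (a + 2 * t)) y ≠ 0 := by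
  have hgeom : ∑ i ∈ range (2 * t), y ^ i ≠ 0 := by
    intro h
    have h2t : y ^ (2 * t) = 1 := by
      have := geom_sum_mul y (2 * t)
      rwa [h, zero_mul, eq_comm, sub_eq_zero] at this
    obtain rfl := (eq_one_or_eq_neg_one_of_pow_two_mul_eq_one hcop_t h2t hy).resolve_right hy1
    simp at h
    omega
  have hodd : y ^ (2 * a + 2 * t + 1) + 1 ≠ 0 := by
    intro h
    have hu : y ^ (2 * a + 2 * t + 1) = -1 := eq_neg_of_add_eq_zero_left h
    obtain rfl := (eq_one_or_eq_neg_one_of_pow_two_mul_eq_one hcop_u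
      (by rw [pow_mul', hu, neg_one_sq]) hy).resolve_right hy1
    norm_num at hu
  intro h0
  have h := circSymbol_Icc_mul_pow hat hy
  rw [h0, zero_mul] at h
  exact mul_ne_zero hodd hgeom h.symm

theorem isNutGraph_circ_Icc {m a t : ℕ} (ht : 0 < t) (hat : a + 2 * t + 1 ≤ m)
    (hcop_t : Nat.Coprime t m) (hcop_u : Nat.Coprime (2 * a + 2 * t + 1) m) :
    IsNutGraph (circ (2 * m) (Icc (a + 1) (a + 2 * t))) :=
  isNutGraph_circ (Complex.isPrimitiveRoot_exp (2 * m) (by omega)) (by omega) (even_two_mul m)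
    (fun s hs => by grind) (circSymbol_Icc_neg_one (by omega) (even_two_mul m))
    (fun _ hy hy1 => circSymbol_Icc_ne_zero ht (by omega) hcop_t hcop_u hy hy1)

lemma exists_coprime_Icc_offset {m t : ℕ} (h : 2 * t + 2 ≤ m) :
    ∃ a, a + 2 * t + 1 ≤ m ∧ Nat.Coprime (2 * a + 2 * t + 1) m := by
  obtain ⟨b, rfl | rfl⟩ := Nat.even_or_odd' m
  · refine ⟨b - t - 1, by omega, ?_⟩
    rw [show 2 * (b - t - 1) + 2 * t + 1 = 2 * b - 1 by omega,
      Nat.coprime_self_sub_left (by omega)]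
    exact Nat.coprime_one_left _
  · refine ⟨b + 1 - t, by omega, ?_⟩
    rw [show 2 * (b + 1 - t) + 2 * t + 1 = 2 + (2 * b + 1) by omega, Nat.coprime_add_self_left,
      Nat.coprime_two_left]
    exact odd_two_mul_add_one b

/-- For a positive integer `t` and an even `n ≥ 4t + 4` with
`gcd(n/2, t) = 1`, there exists `S ⊆ {1,…,n/2−1}` such that `Circ(n, S)` is a
`4t`-regular nut graph. -/
theorem exists_4t_regular_circulant_nut
    (t : ℕ) (ht : 0 < t) (n : ℕ) (hn : 4 * t + 4 ≤ n) (hneven : Even n)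
    (hgcd : Nat.gcd (n / 2) t = 1) :
    ∃ S : Finset ℕ, S ⊆ Finset.Icc 1 (n / 2 - 1) ∧
      IsNutGraph (circ n S) ∧ IsRegularGraph (circ n S) (4 * t) := by
  obtain ⟨m, rfl⟩ : ∃ m, n = 2 * m := hneven.exists_two_nsmul n
  rw [Nat.mul_div_cancel_left m two_pos] at hgcd ⊢
  obtain ⟨a, hat, hcop⟩ := exists_coprime_Icc_offset (by omega : 2 * t + 2 ≤ m)
  have : NeZero (2 * m) := ⟨by omega⟩
  refine ⟨Icc (a + 1) (a + 2 * t), Icc_subset_Icc (by omega) (by omega),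
    isNutGraph_circ_Icc ht hat (Nat.coprime_comm.mp hgcd) hcop, fun k => ?_⟩
  rw [degOf_circ (fun s hs => by grind) k, Nat.card_Icc]
  omega
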